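/- Let H be a real Hilbert space, λ ∈ ℝ, and let Φ : H → (−∞,+∞] be proper, λ-convex, and lower semicontinuous. Let (t_n)_{n∈ℕ} ⊆ 𝔦_{−λ} and t_* ∈ 𝔦_{−λ} be such that t_n → t_* as n → ∞. Then for every x ∈ H, [Φ]^{t_n}(x) → [Φ]^{t_*}(x) as n → ∞. -/

import Mathlib

/-!
With `s = 1 / (2γ)`, the envelope is `s ↦ inf_y (Φ y + s ‖y - x‖²)`, an infimum of affine
functions of `s`, hence concave wherever it is finite. It is finite for `s > -λ/2`: the function
`Φ - (λ/2) ‖· - x‖²` is convex and lower semicontinuous, so near a point of its domain it is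
bounded below, and convexity propagates this to a lower bound of linear growth, which
`(λ/2 + s) ‖y - x‖²` dominates. A concave function finite on an open interval is continuous,
and `γ ∈ 𝔦_{-λ}` means exactly `γ > 0` and `1 / (2γ) > -λ/2`.
-/

open Filter Topology

/-- `Φ` is `λ`-convex: `Φ(tx + (1−t)y) ≤ tΦ(x) + (1−t)Φ(y) − (λ/2)t(1−t)‖x−y‖²`. -/
def LambdaConvex {H : Type*} [NormedAddCommGroup H] [NormedSpace ℝ H]
    (l : ℝ) (Φ : H → EReal) : Prop :=
  ∀ x y : H, ∀ t : ℝ, t ∈ Set.Icc (0 : ℝ) 1 →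
    Φ (t • x + (1 - t) • y) ≤
      (t : EReal) * Φ x + ((1 - t : ℝ) : EReal) * Φ y
        - (((l / 2) * t * (1 - t) * ‖x - y‖ ^ 2 : ℝ) : EReal)

/-- The Moreau envelope `[Φ]^γ(x) = inf_y ( Φ(y) + ‖y − x‖²/(2γ) )`. -/
noncomputable def moreauEnv {H : Type*} [NormedAddCommGroup H]
    (Φ : H → EReal) (γ : ℝ) (x : H) : EReal :=
  ⨅ y : H, Φ y + ((‖y - x‖ ^ 2 / (2 * γ) : ℝ) : EReal)

open Classical in
/-- The interval `𝔦_ω`: `(0, 1/ω)` if `ω > 0` and `(0, +∞)` if `ω ≤ 0`. -/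
noncomputable def Iomega (ω : ℝ) : Set ℝ :=
  if 0 < ω then Set.Ioo 0 (1 / ω) else Set.Ioi 0

open Set

lemma norm_smul_add_one_sub_smul_sub_sq {H : Type*} [NormedAddCommGroup H]
    [InnerProductSpace ℝ H] (y z x : H) (t : ℝ) :
    ‖t • y + (1 - t) • z - x‖ ^ 2
      = t * ‖y - x‖ ^ 2 + (1 - t) * ‖z - x‖ ^ 2 - t * (1 - t) * ‖y - z‖ ^ 2 := by
  rw [show t • y + (1 - t) • z - x = t • (y - x) + (1 - t) • (z - x) by module,
    show y - z = (y - x) - (z - x) by abel, norm_add_sq_real, norm_sub_sq_real (y - x), norm_smul,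
    norm_smul, real_inner_smul_left, real_inner_smul_right, Real.norm_eq_abs, Real.norm_eq_abs,
    mul_pow, mul_pow, sq_abs, sq_abs]
  ring

lemma ConvexOn.sub_mul_norm_sub_le {E : Type*} [NormedAddCommGroup E] [NormedSpace ℝ E]
    {s : Set E} {ψ : E → ℝ} (hψ : ConvexOn ℝ s ψ) {y₀ y : E} (hy₀ : y₀ ∈ s) (hy : y ∈ s)
    {δ m : ℝ} (hδ : 0 < δ) (hm : ∀ z ∈ s, dist z y₀ < δ → m ≤ ψ z) :
    m - 2 * (ψ y₀ - m) / δ * ‖y - y₀‖ ≤ ψ y := by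
  have hm₀ : m ≤ ψ y₀ := hm y₀ hy₀ (by simpa using hδ)
  obtain hnear | hfar := lt_or_ge ‖y - y₀‖ δ
  · have hslope : 0 ≤ 2 * (ψ y₀ - m) / δ * ‖y - y₀‖ := by
      have := sub_nonneg.2 hm₀; positivity
    linarith [hm y hy (by rwa [dist_eq_norm])]
  -- Compare with the point at distance `δ / 2` from `y₀` on the segment towards `y`.
  set d := ‖y - y₀‖
  have hd : 0 < d := hδ.trans_le hfar
  set t := δ / (2 * d)
  have ht₀ : 0 < t := by positivity
  have ht₁ : t ≤ 1 := by rw [div_le_one (by positivity)]; linarith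
  have htd : t * d = δ / 2 := by simp only [t]; field_simp
  have hseg := hψ.1 hy hy₀ ht₀.le (sub_nonneg.2 ht₁) (add_sub_cancel _ _)
  have hdist : dist (t • y + (1 - t) • y₀) y₀ < δ := by
    rw [dist_eq_norm, show t • y + (1 - t) • y₀ - y₀ = t • (y - y₀) by module, norm_smul,
      Real.norm_of_nonneg ht₀.le, htd]
    linarith
  have hψz := (hm _ hseg hdist).trans (hψ.2 hy hy₀ ht₀.le (sub_nonneg.2 ht₁) (add_sub_cancel _ _))
  simp only [smul_eq_mul] at hψz
  refine le_of_mul_le_mul_left ?_ ht₀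
  have hcancel : t * (2 * (ψ y₀ - m) / δ * d) = ψ y₀ - m := by
    rw [show t * (2 * (ψ y₀ - m) / δ * d) = (t * d) * 2 * (ψ y₀ - m) / δ by ring, htd]
    field_simp
  rw [mul_sub, hcancel]
  linarith [mul_le_mul_of_nonneg_left hm₀ ht₀.le]

lemma concaveOn_toReal_iInf_add_mul {ι : Type*} (c : ι → EReal) (a : ι → ℝ) {S : Set ℝ}
    (hS : Convex ℝ S) (hfin : ∀ s ∈ S, ∃ r : ℝ, ⨅ i, c i + ((s * a i : ℝ) : EReal) = r) :
    ConcaveOn ℝ S fun s => (⨅ i, c i + ((s * a i : ℝ) : EReal)).toReal := by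
  refine ⟨hS, fun s₁ hs₁ s₂ hs₂ p q hp hq hpq => ?_⟩
  obtain ⟨r₁, hr₁⟩ := hfin s₁ hs₁
  obtain ⟨r₂, hr₂⟩ := hfin s₂ hs₂
  obtain ⟨r, hr⟩ := hfin _ (hS hs₁ hs₂ hp hq hpq)
  simp only [smul_eq_mul] at hr ⊢
  rw [hr₁, hr₂, hr, EReal.toReal_coe, EReal.toReal_coe, EReal.toReal_coe]
  rw [← EReal.coe_le_coe_iff, ← hr]
  refine le_iInf fun i => ?_
  have h₁ : (r₁ : EReal) ≤ c i + ((s₁ * a i : ℝ) : EReal) := hr₁ ▸ iInf_le _ i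
  have h₂ : (r₂ : EReal) ≤ c i + ((s₂ * a i : ℝ) : EReal) := hr₂ ▸ iInf_le _ i
  generalize c i = ci at h₁ h₂ ⊢
  induction ci using EReal.rec with
  | bot => simp at h₁
  | top => rw [EReal.top_add_coe]; exact le_top
  | coe ρ =>
    norm_cast at h₁ h₂ ⊢
    have hρ : ρ = p * ρ + q * ρ := by rw [← add_mul, hpq, one_mul]
    linarith [mul_le_mul_of_nonneg_left h₁ hp, mul_le_mul_of_nonneg_left h₂ hq]

lemma continuousOn_iInf_add_mul {ι : Type*} (c : ι → EReal) (a : ι → ℝ) {S : Set ℝ}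
    (hSo : IsOpen S) (hS : Convex ℝ S)
    (hfin : ∀ s ∈ S, ∃ r : ℝ, ⨅ i, c i + ((s * a i : ℝ) : EReal) = r) :
    ContinuousOn (fun s => ⨅ i, c i + ((s * a i : ℝ) : EReal)) S := by
  have hG := (concaveOn_toReal_iInf_add_mul c a hS hfin).continuousOn hSo
  refine (continuous_coe_real_ereal.comp_continuousOn hG).congr fun s hs => ?_
  obtain ⟨r, hr⟩ := hfin s hs
  simp only [Function.comp_apply]
  rw [hr, EReal.toReal_coe]

lemma mem_Iomega_neg_iff {l γ : ℝ} : γ ∈ Iomega (-l) ↔ 0 < γ ∧ 0 < 1 + l * γ := by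
  unfold Iomega
  split_ifs with hl
  · rw [mem_Ioo, lt_div_iff₀ hl]
    constructor <;> rintro ⟨hγ, h⟩ <;> exact ⟨hγ, by linarith⟩
  · rw [mem_Ioi]
    exact ⟨fun hγ => ⟨hγ, by nlinarith⟩, And.left⟩

namespace LambdaConvex

variable {H : Type*} [NormedAddCommGroup H] [InnerProductSpace ℝ H] {l : ℝ} {Φ : H → EReal}

lemma convexOn_toReal_sub_sq (hΦ : LambdaConvex l Φ) (hbot : ∀ y, Φ y ≠ ⊥) (x : H) :
    ConvexOn ℝ {y | Φ y ≠ ⊤} fun y => (Φ y).toReal - l / 2 * ‖y - x‖ ^ 2 := by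
  have hseg : ∀ ⦃y⦄, Φ y ≠ ⊤ → ∀ ⦃z⦄, Φ z ≠ ⊤ → ∀ ⦃a b : ℝ⦄, 0 ≤ a → 0 ≤ b → a + b = 1 →
      Φ (a • y + b • z) ≤ ((a * (Φ y).toReal + b * (Φ z).toReal
        - l / 2 * a * b * ‖y - z‖ ^ 2 : ℝ) : EReal) := by
    intro y hy z hz a b ha hb hab
    obtain rfl : b = 1 - a := by linarith
    have h := hΦ y z a ⟨ha, by linarith⟩
    rw [← EReal.coe_toReal hy (hbot y), ← EReal.coe_toReal hz (hbot z)] at h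
    exact_mod_cast h
  refine ⟨fun y hy z hz a b ha hb hab =>
    ne_top_of_le_ne_top (EReal.coe_ne_top _) (hseg hy hz ha hb hab),
    fun y hy z hz a b ha hb hab => ?_⟩
  have h := EReal.toReal_le_toReal (hseg hy hz ha hb hab) (hbot _) (EReal.coe_ne_top _)
  obtain rfl : b = 1 - a := by linarith
  rw [EReal.toReal_coe] at h
  simp only [smul_eq_mul, norm_smul_add_one_sub_smul_sub_sq]
  linear_combination h

lemma exists_sub_mul_norm_sub_le (hΦ : LambdaConvex l Φ) (hbot : ∀ y, Φ y ≠ ⊥)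
    (hlsc : LowerSemicontinuous Φ) {y₀ : H} (hy₀ : Φ y₀ ≠ ⊤) (x : H) :
    ∃ b : ℝ, ∀ y, Φ y ≠ ⊤ → (Φ y₀).toReal - l / 2 * ‖y₀ - x‖ ^ 2 - 2 - b * ‖y - y₀‖
      ≤ (Φ y).toReal - l / 2 * ‖y - x‖ ^ 2 := by
  set ψ : H → ℝ := fun y => (Φ y).toReal - l / 2 * ‖y - x‖ ^ 2
  have hlocal : ∀ᶠ z in 𝓝 y₀, Φ z ≠ ⊤ → ψ y₀ - 2 ≤ ψ z := by
    have hΦz : ∀ᶠ z in 𝓝 y₀, (((Φ y₀).toReal - 1 : ℝ) : EReal) < Φ z :=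
      hlsc y₀ _ <|
        (EReal.coe_lt_coe_iff.2 (sub_one_lt _)).trans_eq (EReal.coe_toReal hy₀ (hbot y₀))
    have hsq : ∀ᶠ z in 𝓝 y₀, l / 2 * ‖z - x‖ ^ 2 < l / 2 * ‖y₀ - x‖ ^ 2 + 1 :=
      (continuousAt_const.mul ((continuous_id.sub continuous_const).norm.pow 2).continuousAt
        ).eventually_lt continuousAt_const (lt_add_one _)
    filter_upwards [hΦz, hsq] with z hz hz' hztop
    rw [← EReal.coe_toReal hztop (hbot z), EReal.coe_lt_coe_iff] at hz
    simp only [ψ]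
    linarith
  obtain ⟨δ, hδ, hball⟩ := Metric.eventually_nhds_iff.1 hlocal
  refine ⟨4 / δ, fun y hy => ?_⟩
  have h := (hΦ.convexOn_toReal_sub_sq hbot x).sub_mul_norm_sub_le hy₀ hy hδ
    fun z hz hzδ => hball hzδ hz
  convert h using 3
  ring

lemma exists_le_add_mul_sq (hΦ : LambdaConvex l Φ) (hbot : ∀ y, Φ y ≠ ⊥)
    (hlsc : LowerSemicontinuous Φ) {y₀ : H} (hy₀ : Φ y₀ ≠ ⊤) (x : H) {s : ℝ}
    (hs : -(l / 2) < s) :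
    ∃ M : ℝ, ∀ y, (M : EReal) ≤ Φ y + ((s * ‖y - x‖ ^ 2 : ℝ) : EReal) := by
  obtain ⟨B, hB⟩ := hΦ.exists_sub_mul_norm_sub_le hbot hlsc hy₀ x
  set c := (Φ y₀).toReal - l / 2 * ‖y₀ - x‖ ^ 2 - 2
  set K := ‖y₀ - x‖
  set q := l + 2 * s with hq_def
  have hq : 0 < q := by linarith
  refine ⟨c - |B| * K - B ^ 2 / (2 * q), fun y => ?_⟩
  by_cases hy : Φ y = ⊤
  · rw [hy, EReal.top_add_coe]
    exact le_top
  rw [← EReal.coe_toReal hy (hbot y), ← EReal.coe_add, EReal.coe_le_coe_iff]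
  set e := ‖y - x‖
  have htri : |‖y - y₀‖ - e| ≤ K := by
    simpa only [sub_sub_sub_cancel_left, norm_sub_rev x y₀] using
      abs_norm_sub_norm_le (y - y₀) (y - x)
  -- `(q / 2) e² - B e` is minimal at `e = B / q`.
  have hquad : B ^ 2 / (2 * q) + (q / 2 * e ^ 2 - B * e) = (q * e - B) ^ 2 / (2 * q) := by
    field_simp
    ring
  have hquad' : 0 ≤ (q * e - B) ^ 2 / (2 * q) := by positivity
  have hqe : q / 2 * e ^ 2 = l / 2 * e ^ 2 + s * e ^ 2 := by rw [hq_def]; ring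
  have hBK : B * (‖y - y₀‖ - e) ≤ |B| * K :=
    (le_abs_self _).trans (abs_mul B _ ▸ mul_le_mul_of_nonneg_left htri (abs_nonneg B))
  linarith [hB y hy]

lemma continuousAt_moreauEnv (hΦ : LambdaConvex l Φ) (hbot : ∀ y, Φ y ≠ ⊥)
    (hlsc : LowerSemicontinuous Φ) (hproper : ∃ y, Φ y ≠ ⊤) (x : H) {γ : ℝ}
    (hγ : γ ∈ Iomega (-l)) :
    ContinuousAt (fun γ => moreauEnv Φ γ x) γ := by
  obtain ⟨y₀, hy₀⟩ := hproper
  have hfin : ∀ s ∈ Ioi (-(l / 2)), ∃ r : ℝ, ⨅ y, Φ y + ((s * ‖y - x‖ ^ 2 : ℝ) : EReal) = r := by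
    intro s hs
    obtain ⟨M, hM⟩ := hΦ.exists_le_add_mul_sq hbot hlsc hy₀ x hs
    have hne_bot := ne_bot_of_le_ne_bot (EReal.coe_ne_bot M) (le_iInf hM)
    have hne_top := ne_top_of_le_ne_top (EReal.add_ne_top hy₀ (EReal.coe_ne_top _))
      (iInf_le (fun y => Φ y + ((s * ‖y - x‖ ^ 2 : ℝ) : EReal)) y₀)
    exact ⟨_, (EReal.coe_toReal hne_top hne_bot).symm⟩
  have henv : (fun γ => moreauEnv Φ γ x)
      = (fun s => ⨅ y, Φ y + ((s * ‖y - x‖ ^ 2 : ℝ) : EReal)) ∘ fun γ : ℝ => 1 / (2 * γ) := by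
    funext γ'
    simp only [moreauEnv, Function.comp, one_div_mul_eq_div]
  obtain ⟨hγ₀, hγl⟩ := mem_Iomega_neg_iff.1 hγ
  have hs : 1 / (2 * γ) ∈ Ioi (-(l / 2)) := by
    rw [mem_Ioi, lt_div_iff₀ (by positivity)]
    linarith
  have hinv : ContinuousAt (fun γ : ℝ => 1 / (2 * γ)) γ := by fun_prop (disch := positivity)
  rw [henv]
  exact ContinuousAt.comp (f := fun γ : ℝ => 1 / (2 * γ))
    ((continuousOn_iInf_add_mul _ _ isOpen_Ioi (convex_Ioi _) hfin).continuousAt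
      (Ioi_mem_nhds hs)) hinv

end LambdaConvex

theorem moreauEnv_tendsto_general {H : Type*} [NormedAddCommGroup H]
    [InnerProductSpace ℝ H] (l : ℝ) (Φ : H → EReal)
    (hbot : ∀ x, Φ x ≠ ⊥) (hproper : ∃ x, Φ x ≠ ⊤)
    (hconv : LambdaConvex l Φ) (hlsc : LowerSemicontinuous Φ)
    (t : ℕ → ℝ) (tstar : ℝ) (htstar : tstar ∈ Iomega (-l))
    (htend : Tendsto t atTop (𝓝 tstar)) (x : H) :
    Tendsto (fun n => moreauEnv Φ (t n) x) atTop (𝓝 (moreauEnv Φ tstar x)) :=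
  ((hconv.continuousAt_moreauEnv hbot hlsc hproper x htstar).tendsto).comp htend

/-- Let `Φ : H → (−∞,+∞]` be proper, `λ`-convex, and lower semicontinuous on a
real Hilbert space `H`. If `(t_n) ⊆ 𝔦_{−λ}` and `t_* ∈ 𝔦_{−λ}` with `t_n → t_*`, then for every
`x ∈ H`, `[Φ]^{t_n}(x) → [Φ]^{t_*}(x)`. -/
theorem moreauEnv_tendsto {H : Type*} [NormedAddCommGroup H]
    [InnerProductSpace ℝ H] [CompleteSpace H] (l : ℝ) (Φ : H → EReal)
    (hbot : ∀ x, Φ x ≠ ⊥) (hproper : ∃ x, Φ x ≠ ⊤)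
    (hconv : LambdaConvex l Φ) (hlsc : LowerSemicontinuous Φ)
    (t : ℕ → ℝ) (ht : ∀ n, t n ∈ Iomega (-l)) (tstar : ℝ) (htstar : tstar ∈ Iomega (-l))
    (htend : Tendsto t atTop (𝓝 tstar)) (x : H) :
    Tendsto (fun n => moreauEnv Φ (t n) x) atTop (𝓝 (moreauEnv Φ tstar x)) :=
  moreauEnv_tendsto_general l Φ hbot hproper hconv hlsc t tstar htstar htend x
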